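/- arXiv:2502.10945 — 2 statements merged into one kernel-verified Lean document; each statement's English description precedes it below -/
import Mathlib

section
/- Let A be a finite-dimensional ℝ-algebra equipped with an ℝ-linear involution x ↦ x' (an anti-automorphism of order ≤ 2) that is positive, meaning Tr(x·x') > 0 for all nonzero x ∈ A (Tr denoting the trace of left multiplication). Then A is a semisimple algebra. -/
/-!
The Jacobson radical `J` of the Artinian ring `A` is nilpotent. Positivity makes the involution
anisotropic (`x * σ x = 0` only for `x = 0`), so a nonzero symmetric element `b` has
`b * b = b * σ b ≠ 0`; iterating, all `b ^ 2 ^ k` are nonzero and `b` is not nilpotent. For `x ∈ J`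
the symmetric element `σ x * x` lies in `J`, hence is nilpotent, hence zero, and anisotropy applied to
`σ x` gives `x = 0`.
-/

variable {A : Type*} [Ring A]

theorem isNilpotent_of_mem_jacobson_bot [IsArtinianRing A] {x : A}
    (hx : x ∈ (⊥ : Ideal A).jacobson) : IsNilpotent x := by
  obtain ⟨n, hn⟩ := IsArtinianRing.isNilpotent_jacobson_bot (R := A)
  exact ⟨n, by simpa [hn] using Ideal.pow_mem_pow hx n⟩

theorem not_isNilpotent_of_apply_eq_self (σ : A → A) (hanti : ∀ x y, σ (x * y) = σ y * σ x)
    (haniso : ∀ x, x * σ x = 0 → x = 0) {b : A} (hb : σ b = b) (hb0 : b ≠ 0) :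
    ¬IsNilpotent b := by
  have hpow : ∀ k : ℕ, σ (b ^ 2 ^ k) = b ^ 2 ^ k ∧ b ^ 2 ^ k ≠ 0 := by
    intro k
    induction k with
    | zero => simpa using ⟨hb, hb0⟩
    | succ k ih =>
      obtain ⟨hsymm, hne⟩ := ih
      rw [pow_succ, pow_mul, sq]
      exact ⟨by rw [hanti, hsymm], fun h => hne (haniso _ (by rwa [hsymm]))⟩
  rintro ⟨n, hn⟩
  exact (hpow n).2 (pow_eq_zero_of_le n.lt_two_pow_self.le hn)

theorem jacobson_bot_eq_bot_of_anisotropic [IsArtinianRing A] (σ : A →+ A)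
    (hanti : ∀ x y, σ (x * y) = σ y * σ x) (hinv : ∀ x, σ (σ x) = x)
    (haniso : ∀ x, x * σ x = 0 → x = 0) : (⊥ : Ideal A).jacobson = ⊥ := by
  refine eq_bot_iff.mpr fun x hx => ?_
  have hsymm : σ (σ x * x) = σ x * x := by rw [hanti, hinv]
  have hnil : IsNilpotent (σ x * x) := isNilpotent_of_mem_jacobson_bot (Ideal.mul_mem_left _ _ hx)
  have hnorm : σ x * x = 0 := by
    by_contra h
    exact not_isNilpotent_of_apply_eq_self σ hanti haniso hsymm h hnil
  have hσx : σ x = 0 := haniso (σ x) (by rwa [hinv])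
  rw [Ideal.mem_bot, ← hinv x, hσx, map_zero]

/-- A finite-dimensional real algebra with a positive involution is semisimple
(its Jacobson radical is zero). Here `Tr` is the trace of left multiplication. -/
theorem semisimple_of_positive_involution
    (A : Type) [Ring A] [Algebra ℝ A] [FiniteDimensional ℝ A]
    (σ : A →ₗ[ℝ] A)
    (hanti : ∀ x y : A, σ (x * y) = σ y * σ x)
    (hinv : ∀ x : A, σ (σ x) = x)
    (hpos : ∀ x : A, x ≠ 0 →
      0 < LinearMap.trace ℝ A (LinearMap.mulLeft ℝ (x * σ x))) :
    (⊥ : Ideal A).jacobson = ⊥ := by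
  have := IsArtinianRing.of_finite ℝ A
  refine jacobson_bot_eq_bot_of_anisotropic σ.toAddMonoidHom hanti hinv fun x hx => ?_
  by_contra hx0
  have htrace := hpos x hx0
  rw [show x * σ x = 0 from hx, LinearMap.mulLeft_zero_eq_zero, map_zero] at htrace
  exact htrace.false
end

section
/- Let A be a finite-dimensional ℝ-algebra with a positive involution x ↦ x' (i.e., Tr(x x') > 0 for x ≠ 0). If α ∈ A satisfies α · α' = q · 1 for some positive real number q, then every eigenvalue λ ∈ ℂ of left multiplication by α on A ⊗_ℝ ℂ has absolute value √q. -/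
/-!
Write `Q x = Tr(x x')`, a positive definite quadratic form on `A`. Since `A` is
finite-dimensional, `α α' = q` forces `α' α = q`, and then `Tr(u v) = Tr(v u)` gives
`Q (α x) = Tr(x x' α' α) = q Q x`: left multiplication by `α` is a similitude of `Q` with
multiplier `q`. If `a + i b` is an eigenvector of its complexification with eigenvalue `λ`, then
`α a = Re λ • a - Im λ • b` and `α b = Im λ • a + Re λ • b`, so that
`q (Q a + Q b) = Q (α a) + Q (α b) = |λ|² (Q a + Q b)`, and `Q a + Q b > 0`.
-/

open TensorProduct

namespace TensorProduct

variable {V : Type*} [AddCommGroup V] [Module ℝ V]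

variable (V) in
noncomputable def complexRe : ℂ ⊗[ℝ] V →ₗ[ℝ] V :=
  lift ((LinearMap.lsmul ℝ V).comp Complex.reLm)

variable (V) in
noncomputable def complexIm : ℂ ⊗[ℝ] V →ₗ[ℝ] V :=
  lift ((LinearMap.lsmul ℝ V).comp Complex.imLm)

@[simp]
theorem complexRe_tmul (z : ℂ) (x : V) : complexRe V (z ⊗ₜ x) = z.re • x := rfl

@[simp]
theorem complexIm_tmul (z : ℂ) (x : V) : complexIm V (z ⊗ₜ x) = z.im • x := rfl

theorem one_tmul_complexRe_add_I_tmul_complexIm (u : ℂ ⊗[ℝ] V) :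
    (1 : ℂ) ⊗ₜ complexRe V u + Complex.I ⊗ₜ complexIm V u = u := by
  induction u using TensorProduct.induction_on with
  | zero => simp
  | tmul z x =>
    rw [complexRe_tmul, complexIm_tmul, ← smul_tmul, ← smul_tmul, ← add_tmul,
      Complex.real_smul, Complex.real_smul, mul_one, Complex.re_add_im]
  | add u v hu hv =>
    rw [map_add, map_add, tmul_add, tmul_add, add_add_add_comm, hu, hv]

theorem complexRe_ne_zero_or_complexIm_ne_zero {u : ℂ ⊗[ℝ] V} (hu : u ≠ 0) :
    complexRe V u ≠ 0 ∨ complexIm V u ≠ 0 := by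
  contrapose! hu
  rw [← one_tmul_complexRe_add_I_tmul_complexIm u, hu.1, hu.2, tmul_zero, tmul_zero, add_zero]

theorem complexRe_smul (z : ℂ) (u : ℂ ⊗[ℝ] V) :
    complexRe V (z • u) = z.re • complexRe V u - z.im • complexIm V u := by
  induction u using TensorProduct.induction_on with
  | zero => simp
  | tmul w x => simp [smul_tmul', smul_smul, ← sub_smul]
  | add u v hu hv => simp only [smul_add, map_add, hu, hv]; abel

theorem complexIm_smul (z : ℂ) (u : ℂ ⊗[ℝ] V) :
    complexIm V (z • u) = z.im • complexRe V u + z.re • complexIm V u := by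
  induction u using TensorProduct.induction_on with
  | zero => simp
  | tmul w x =>
    rw [smul_tmul', complexIm_tmul, complexRe_tmul, complexIm_tmul, smul_smul, smul_smul,
      ← add_smul, smul_eq_mul, Complex.mul_im, add_comm]
  | add u v hu hv => simp only [smul_add, map_add, hu, hv]; abel

theorem complexRe_baseChange (f : V →ₗ[ℝ] V) (u : ℂ ⊗[ℝ] V) :
    complexRe V (f.baseChange ℂ u) = f (complexRe V u) := by
  induction u using TensorProduct.induction_on with
  | zero => simp
  | tmul z x => simp
  | add u v hu hv => simp only [map_add, hu, hv]

theorem complexIm_baseChange (f : V →ₗ[ℝ] V) (u : ℂ ⊗[ℝ] V) :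
    complexIm V (f.baseChange ℂ u) = f (complexIm V u) := by
  induction u using TensorProduct.induction_on with
  | zero => simp
  | tmul z x => simp
  | add u v hu hv => simp only [map_add, hu, hv]

end TensorProduct

theorem QuadraticMap.PosDef.normSq_eq_of_hasEigenvalue_baseChange {V : Type*} [AddCommGroup V]
    [Module ℝ V] {Q : QuadraticForm ℝ V} (hQ : Q.PosDef) {f : V →ₗ[ℝ] V} {q : ℝ}
    (hf : ∀ x, Q (f x) = q * Q x) {μ : ℂ} (hμ : Module.End.HasEigenvalue (f.baseChange ℂ) μ) :
    Complex.normSq μ = q := by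
  obtain ⟨v, hv⟩ := hμ.exists_hasEigenvector
  set a := complexRe V v
  set b := complexIm V v
  have hfa : f a = μ.re • a + (-μ.im) • b := by
    rw [neg_smul, ← sub_eq_add_neg, ← complexRe_smul, ← hv.apply_eq_smul, complexRe_baseChange]
  have hfb : f b = μ.im • a + μ.re • b := by
    rw [← complexIm_smul, ← hv.apply_eq_smul, complexIm_baseChange]
  have hpos : 0 < Q a + Q b := by
    rcases complexRe_ne_zero_or_complexIm_ne_zero hv.2 with h | h
    · exact add_pos_of_pos_of_nonneg (hQ a h) (hQ.nonneg b)
    · exact add_pos_of_nonneg_of_pos (hQ.nonneg a) (hQ b h)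
  obtain ⟨B, hB⟩ := Q.exists_companion
  have hsum : q * (Q a + Q b) = Complex.normSq μ * (Q a + Q b) := by
    calc q * (Q a + Q b) = Q (f a) + Q (f b) := by rw [hf, hf, mul_add]
      _ = Complex.normSq μ * (Q a + Q b) := by
        rw [hfa, hfb, hB, hB]
        simp only [QuadraticMap.map_smul, map_smul, LinearMap.smul_apply, smul_eq_mul,
          Complex.normSq_apply]
        ring
  exact (mul_right_cancel₀ hpos.ne' hsum).symm

theorem mul_eq_smul_one_symm {K A : Type*} [Field K] [Ring A] [Algebra K A]
    [FiniteDimensional K A] {a b : A} {q : K} (hq : q ≠ 0) (h : a * b = q • 1) :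
    b * a = q • 1 := by
  have := IsDedekindFiniteMonoid.of_injective (Algebra.lmul K A) Algebra.lmul_injective
  have hright : a * (q⁻¹ • b) = 1 := by
    rw [mul_smul_comm, h, smul_smul, inv_mul_cancel₀ hq, one_smul]
  rw [← mul_eq_one_symm hright, smul_mul_assoc, smul_smul, mul_inv_cancel₀ hq, one_smul]

section InvolutionTraceForm

variable {K A : Type*} [CommRing K] [Ring A] [Algebra K A]

variable (σ : A →ₗ[K] A) in
noncomputable def involutionTraceForm : LinearMap.BilinForm K A :=
  ((LinearMap.mul K A).compl₂ σ).compr₂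
    ((LinearMap.trace K A).comp (Algebra.lmul K A).toLinearMap)

theorem involutionTraceForm_apply (σ : A →ₗ[K] A) (x y : A) :
    involutionTraceForm σ x y = LinearMap.trace K A (Algebra.lmul K A (x * σ y)) := rfl

theorem involutionTraceForm_mul_mul {σ : A →ₗ[K] A} (hanti : ∀ x y : A, σ (x * y) = σ y * σ x)
    {α : A} {q : K} (hα : σ α * α = q • 1) (x y : A) :
    involutionTraceForm σ (α * x) (α * y) = q * involutionTraceForm σ x y := by
  simp only [involutionTraceForm_apply, hanti]
  calc LinearMap.trace K A (Algebra.lmul K A (α * x * (σ y * σ α)))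
      = LinearMap.trace K A (Algebra.lmul K A α * Algebra.lmul K A (x * σ y * σ α)) := by
        rw [← map_mul (Algebra.lmul K A)]; simp only [mul_assoc]
    _ = LinearMap.trace K A (Algebra.lmul K A (x * σ y * (σ α * α))) := by
        rw [LinearMap.trace_mul_comm, ← map_mul (Algebra.lmul K A), mul_assoc]
    _ = q * LinearMap.trace K A (Algebra.lmul K A (x * σ y)) := by
        rw [hα, mul_smul_one, map_smul, map_smul, smul_eq_mul]

end InvolutionTraceForm

theorem eigenvalue_abs_of_positive_involution_general
    (A : Type) [Ring A] [Algebra ℝ A] [FiniteDimensional ℝ A]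
    (σ : A →ₗ[ℝ] A)
    (hanti : ∀ x y : A, σ (x * y) = σ y * σ x)
    (hpos : ∀ x : A, x ≠ 0 →
      0 < LinearMap.trace ℝ A (LinearMap.mulLeft ℝ (x * σ x)))
    (α : A) (q : ℝ) (hq : 0 < q) (hα : α * σ α = q • (1 : A))
    (lam : ℂ)
    (hlam : Module.End.HasEigenvalue
      ((LinearMap.mulLeft ℝ α).baseChange ℂ) lam) :
    ‖lam‖ = Real.sqrt q := by
  set Q := (involutionTraceForm σ).toQuadraticMap
  have hQ : Q.PosDef := hpos
  have hsim (x : A) : Q (LinearMap.mulLeft ℝ α x) = q * Q x :=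
    involutionTraceForm_mul_mul hanti (mul_eq_smul_one_symm hq.ne' hα) x x
  rw [Complex.norm_def, hQ.normSq_eq_of_hasEigenvalue_baseChange hsim hlam]

/-- Weil's positivity argument: if `A` is a finite-dimensional real algebra with a positive
involution `σ` and `α * σ α = q • 1` with `q > 0`, then every eigenvalue of left
multiplication by `α` on `A ⊗ ℂ` has absolute value `√q`. -/
theorem eigenvalue_abs_of_positive_involution
    (A : Type) [Ring A] [Algebra ℝ A] [FiniteDimensional ℝ A]
    (σ : A →ₗ[ℝ] A)
    (hanti : ∀ x y : A, σ (x * y) = σ y * σ x)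
    (hinv : ∀ x : A, σ (σ x) = x)
    (hpos : ∀ x : A, x ≠ 0 →
      0 < LinearMap.trace ℝ A (LinearMap.mulLeft ℝ (x * σ x)))
    (α : A) (q : ℝ) (hq : 0 < q) (hα : α * σ α = q • (1 : A))
    (lam : ℂ)
    (hlam : Module.End.HasEigenvalue
      ((LinearMap.mulLeft ℝ α).baseChange ℂ) lam) :
    ‖lam‖ = Real.sqrt q :=
  eigenvalue_abs_of_positive_involution_general A σ hanti hpos α q hq hα lam hlam
end
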